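/- For every integer n ≥ 1 and every i ∈ ℕ: c i + d i = 2·(a i + b i); c i − d i = 2n·(b i); (c i)·(d i) = 2·(a i)·(b i) + 1; a i = c i − (n+1)·(b i); and gcd(c i, d i) = 1. (These identities express that the class A_{i,n} = (a i, b i; W(c i, d i)) has Chern number 1 and self-intersection −1, i.e. is quasi-perfect, with coprime weight parameters.) -/

import Mathlib

/-- The solution of x 0 = x0, x 1 = x1, x (i+2) = 2n·x (i+1) − x i. -/
def rec2 (n : ℕ) (x0 x1 : ℤ) : ℕ → ℤ
  | 0 => x0
  | 1 => x1
  | i + 2 => 2 * n * rec2 n x0 x1 (i + 1) - rec2 n x0 x1 i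

/-- a i : a 0 = 1, a 1 = n. -/
def sa (n : ℕ) : ℕ → ℤ := rec2 n 1 n
/-- b i : b 0 = 0, b 1 = 1. -/
def sb (n : ℕ) : ℕ → ℤ := rec2 n 0 1
/-- c i : c 0 = 1, c 1 = 2n+1. -/
def sc (n : ℕ) : ℕ → ℤ := rec2 n 1 (2 * n + 1)
/-- d i : d 0 = 1, d 1 = 1. -/
def sd (n : ℕ) : ℕ → ℤ := rec2 n 1 1

/-!
Everything follows from three facts about solutions of `x (i+2) = 2n·x (i+1) − x i`. A solution is
determined by its first two terms, so `c = a + (n+1)·b`, `d = a + (1−n)·b` and `a i = b (i+1) − n·b i`;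
this makes the first, second and fourth identities linear. The quadratic form
`x (i+1)² − 2n·x (i+1)·x i + x i²` is conserved, which for `b` is the Pell equation
`a² − (n²−1)·b² = 1`, and that is exactly `c·d = 2ab + 1`. Finally, modulo `2n` the recurrence reads
`x (i+2) ≡ −x i`, so `c` stays coprime to `2n`; since `c·d − 2ab = 1` it is also coprime to `b`, hence to
`2n·b = c − d`, hence to `d`.
-/

section Recurrence

variable {n : ℕ} {x0 x1 : ℤ}

theorem rec2_add_two (n : ℕ) (x0 x1 : ℤ) (i : ℕ) :
    rec2 n x0 x1 (i + 2) = 2 * n * rec2 n x0 x1 (i + 1) - rec2 n x0 x1 i := rfl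

theorem eq_rec2 {f : ℕ → ℤ} (h0 : f 0 = x0) (h1 : f 1 = x1)
    (hf : ∀ i, f (i + 2) = 2 * n * f (i + 1) - f i) (i : ℕ) : f i = rec2 n x0 x1 i := by
  induction i using Nat.twoStepInduction with
  | zero => exact h0
  | one => exact h1
  | more i ih0 ih1 => rw [hf, ih0, ih1, rec2_add_two]

theorem rec2_invariant (n : ℕ) (x0 x1 : ℤ) (i : ℕ) :
    rec2 n x0 x1 (i + 1) ^ 2 - 2 * n * rec2 n x0 x1 (i + 1) * rec2 n x0 x1 i + rec2 n x0 x1 i ^ 2 =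
      x1 ^ 2 - 2 * n * x1 * x0 + x0 ^ 2 := by
  induction i with
  | zero => rfl
  | succ i ih => rw [rec2_add_two]; linear_combination ih

theorem isCoprime_rec2 (h0 : IsCoprime x0 (2 * n)) (h1 : IsCoprime x1 (2 * n)) (i : ℕ) :
    IsCoprime (rec2 n x0 x1 i) (2 * n) := by
  induction i using Nat.twoStepInduction with
  | zero => exact h0
  | one => exact h1
  | more i ih0 _ =>
    rw [rec2_add_two, sub_eq_neg_add, mul_comm, IsCoprime.add_mul_right_left_iff]
    exact ih0.neg_left

end Recurrence

theorem sc_eq (n i : ℕ) : sc n i = sa n i + (n + 1) * sb n i :=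
  (eq_rec2 (f := fun i => sa n i + (n + 1) * sb n i) (by simp [sa, sb, rec2]) (by simp [sa, sb, rec2]; ring)
    (fun i => by simp only [sa, sb, rec2_add_two]; ring) i).symm

theorem sd_eq (n i : ℕ) : sd n i = sa n i + (1 - n) * sb n i :=
  (eq_rec2 (f := fun i => sa n i + (1 - n) * sb n i) (by simp [sa, sb, rec2]) (by simp [sa, sb, rec2])
    (fun i => by simp only [sa, sb, rec2_add_two]; ring) i).symm

theorem sa_eq_sb_succ_sub (n i : ℕ) : sa n i = sb n (i + 1) - n * sb n i :=
  (eq_rec2 (f := fun i => sb n (i + 1) - n * sb n i) (by simp [sb, rec2]) (by simp [sb, rec2]; ring)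
    (fun i => by simp only [sb, rec2_add_two]; ring) i).symm

theorem sa_sq_sub_mul_sb_sq (n i : ℕ) : sa n i ^ 2 - ((n : ℤ) ^ 2 - 1) * sb n i ^ 2 = 1 := by
  rw [sa_eq_sb_succ_sub, sb]
  linear_combination rec2_invariant n 0 1 i

theorem sc_sub_sd (n i : ℕ) : sc n i - sd n i = 2 * n * sb n i := by
  rw [sc_eq, sd_eq]; ring

theorem sc_mul_sd (n i : ℕ) : sc n i * sd n i = 2 * sa n i * sb n i + 1 := by
  rw [sc_eq, sd_eq]; linear_combination sa_sq_sub_mul_sb_sq n i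

theorem isCoprime_sc_sd (n i : ℕ) : IsCoprime (sc n i) (sd n i) := by
  have hc2n : IsCoprime (sc n i) (2 * n) :=
    isCoprime_rec2 isCoprime_one_left ⟨1, -1, by ring⟩ i
  have hcb : IsCoprime (sc n i) (sb n i) :=
    ⟨sd n i, -2 * sa n i, by linear_combination sc_mul_sd n i⟩
  have hcd : IsCoprime (sc n i) (sc n i - sd n i) := by
    rw [sc_sub_sd]; exact hc2n.mul_right hcb
  simpa using hcd.neg_right.add_mul_left_right 1

theorem stmt_18_general (n : ℕ) (i : ℕ) :
    sc n i + sd n i = 2 * (sa n i + sb n i) ∧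
    sc n i - sd n i = 2 * n * sb n i ∧
    sc n i * sd n i = 2 * sa n i * sb n i + 1 ∧
    sa n i = sc n i - (n + 1) * sb n i ∧
    Int.gcd (sc n i) (sd n i) = 1 :=
  ⟨by rw [sc_eq, sd_eq]; ring, sc_sub_sd n i, sc_mul_sd n i, by rw [sc_eq]; ring,
    Int.isCoprime_iff_gcd_eq_one.mp (isCoprime_sc_sd n i)⟩

theorem stmt_18 (n : ℕ) (hn : 1 ≤ n) (i : ℕ) :
    sc n i + sd n i = 2 * (sa n i + sb n i) ∧
    sc n i - sd n i = 2 * n * sb n i ∧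
    sc n i * sd n i = 2 * sa n i * sb n i + 1 ∧
    sa n i = sc n i - (n + 1) * sb n i ∧
    Int.gcd (sc n i) (sd n i) = 1 :=
  stmt_18_general n i
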